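/- For random vectors U ∈ ℝ^p, V ∈ ℝ^q with finite first moments, constant vectors a₁ ∈ ℝ^p, a₂ ∈ ℝ^q, nonzero scalars b₁, b₂, and orthogonal matrices C₁ ∈ ℝ^{p×p}, C₂ ∈ ℝ^{q×q}, we have V(a₁ + b₁ C₁ U, a₂ + b₂ C₂ V) = √(|b₁ b₂|) · V(U, V). -/

import Mathlib

/-! Every term of `dcov2` is linear in the distances `‖U ω - U ω'‖` and in the distances
`‖V ω - V ω'‖`, so a map scaling all distances by `r` (resp. `s`) scales `dcov2` by `r * s`.
An affine map `x ↦ a + b • C x` with `C` orthogonal scales distances by `|b|`. -/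

open MeasureTheory ProbabilityTheory

/-- Squared distance covariance of two random elements, via the moment formula with
independent copies realized as product measures. -/
noncomputable def dcov2 {Ω E F : Type*} [MeasurableSpace Ω]
    [NormedAddCommGroup E] [NormedAddCommGroup F]
    (μ : Measure Ω) (U : Ω → E) (V : Ω → F) : ℝ :=
  (∫ ω, ‖U ω.1 - U ω.2‖ * ‖V ω.1 - V ω.2‖ ∂(μ.prod μ))
  + (∫ ω, ‖U ω.1 - U ω.2‖ ∂(μ.prod μ)) * (∫ ω, ‖V ω.1 - V ω.2‖ ∂(μ.prod μ))
  - (∫ ω, ‖U ω.1 - U ω.2.1‖ * ‖V ω.1 - V ω.2.2‖ ∂(μ.prod (μ.prod μ)))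
  - (∫ ω, ‖U ω.1 - U ω.2.2‖ * ‖V ω.1 - V ω.2.1‖ ∂(μ.prod (μ.prod μ)))


noncomputable def dcov {Ω E F : Type*} [MeasurableSpace Ω]
    [NormedAddCommGroup E] [NormedAddCommGroup F]
    (μ : Measure Ω) (U : Ω → E) (V : Ω → F) : ℝ :=
  Real.sqrt (dcov2 μ U V)

section Similarity

variable {Ω E F E' F' : Type*} [MeasurableSpace Ω]
  [NormedAddCommGroup E] [NormedAddCommGroup F] [NormedAddCommGroup E'] [NormedAddCommGroup F']

theorem dcov2_comp_of_norm_sub_eq (μ : Measure Ω) (U : Ω → E) (V : Ω → F)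
    {f : E → E'} {g : F → F'} {r s : ℝ}
    (hf : ∀ x y, ‖f x - f y‖ = r * ‖x - y‖) (hg : ∀ x y, ‖g x - g y‖ = s * ‖x - y‖) :
    dcov2 μ (f ∘ U) (g ∘ V) = r * s * dcov2 μ U V := by
  simp only [dcov2, Function.comp_apply, hf, hg, mul_mul_mul_comm r _ s, integral_const_mul]
  ring

theorem dcov_comp_of_norm_sub_eq (μ : Measure Ω) (U : Ω → E) (V : Ω → F)
    {f : E → E'} {g : F → F'} {r s : ℝ}
    (hf : ∀ x y, ‖f x - f y‖ = r * ‖x - y‖) (hg : ∀ x y, ‖g x - g y‖ = s * ‖x - y‖)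
    (hrs : 0 ≤ r * s) :
    dcov μ (f ∘ U) (g ∘ V) = √(r * s) * dcov μ U V := by
  rw [dcov, dcov2_comp_of_norm_sub_eq μ U V hf hg, Real.sqrt_mul hrs, dcov]

end Similarity

theorem norm_add_smul_sub_add_smul {𝕜 E F : Type*} [NormedField 𝕜]
    [SeminormedAddCommGroup E] [SeminormedAddCommGroup F] [NormedSpace 𝕜 E] [NormedSpace 𝕜 F]
    (L : E →ₗᵢ[𝕜] F) (a : F) (b : 𝕜) (x y : E) :
    ‖(a + b • L x) - (a + b • L y)‖ = ‖b‖ * ‖x - y‖ := by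
  rw [add_sub_add_left_eq_sub, ← smul_sub, ← map_sub, norm_smul, L.norm_map]

noncomputable def Matrix.unitaryGroup.toLinearIsometryEquiv {𝕜 n : Type*} [RCLike 𝕜]
    [Fintype n] [DecidableEq n] (C : Matrix.unitaryGroup n 𝕜) :
    EuclideanSpace 𝕜 n ≃ₗᵢ[𝕜] EuclideanSpace 𝕜 n :=
  Unitary.linearIsometryEquiv ⟨_, Unitary.map_mem (Matrix.toEuclideanCLM (𝕜 := 𝕜)) C.2⟩

theorem dcov_affine_general {Ω : Type*} [MeasurableSpace Ω] (μ : Measure Ω)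
    {p q : ℕ} (U : Ω → EuclideanSpace ℝ (Fin p)) (V : Ω → EuclideanSpace ℝ (Fin q))
    (a₁ : EuclideanSpace ℝ (Fin p)) (a₂ : EuclideanSpace ℝ (Fin q))
    (b₁ b₂ : ℝ)
    (C₁ : Matrix (Fin p) (Fin p) ℝ) (hC₁ : C₁ ∈ Matrix.orthogonalGroup (Fin p) ℝ)
    (C₂ : Matrix (Fin q) (Fin q) ℝ) (hC₂ : C₂ ∈ Matrix.orthogonalGroup (Fin q) ℝ) :
    dcov μ
      (fun ω => a₁ + b₁ • (EuclideanSpace.equiv (Fin p) ℝ).symm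
        (C₁.mulVec (EuclideanSpace.equiv (Fin p) ℝ (U ω))))
      (fun ω => a₂ + b₂ • (EuclideanSpace.equiv (Fin q) ℝ).symm
        (C₂.mulVec (EuclideanSpace.equiv (Fin q) ℝ (V ω))))
      = Real.sqrt |b₁ * b₂| * dcov μ U V := by
  let L₁ := Matrix.unitaryGroup.toLinearIsometryEquiv ⟨C₁, hC₁⟩
  let L₂ := Matrix.unitaryGroup.toLinearIsometryEquiv ⟨C₂, hC₂⟩
  rw [abs_mul, ← Real.norm_eq_abs, ← Real.norm_eq_abs]
  -- `L₁ x` is definitionally `C₁ *ᵥ x` read in Euclidean space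
  exact dcov_comp_of_norm_sub_eq μ U V
    (f := fun x => a₁ + b₁ • L₁ x) (g := fun y => a₂ + b₂ • L₂ y)
    (norm_add_smul_sub_add_smul L₁.toLinearIsometry a₁ b₁)
    (norm_add_smul_sub_add_smul L₂.toLinearIsometry a₂ b₂) (by positivity)

/-- Scaling/invariance property of distance covariance under affine transformations
with orthogonal matrices. -/
theorem dcov_affine {Ω : Type*} [MeasurableSpace Ω] (μ : Measure Ω)
    [IsProbabilityMeasure μ]
    {p q : ℕ} (U : Ω → EuclideanSpace ℝ (Fin p)) (V : Ω → EuclideanSpace ℝ (Fin q))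
    (hU : Measurable U) (hV : Measurable V)
    (hUint : Integrable (fun ω => ‖U ω‖) μ) (hVint : Integrable (fun ω => ‖V ω‖) μ)
    (a₁ : EuclideanSpace ℝ (Fin p)) (a₂ : EuclideanSpace ℝ (Fin q))
    (b₁ b₂ : ℝ) (hb₁ : b₁ ≠ 0) (hb₂ : b₂ ≠ 0)
    (C₁ : Matrix (Fin p) (Fin p) ℝ) (hC₁ : C₁ ∈ Matrix.orthogonalGroup (Fin p) ℝ)
    (C₂ : Matrix (Fin q) (Fin q) ℝ) (hC₂ : C₂ ∈ Matrix.orthogonalGroup (Fin q) ℝ) :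
    dcov μ
      (fun ω => a₁ + b₁ • (EuclideanSpace.equiv (Fin p) ℝ).symm
        (C₁.mulVec (EuclideanSpace.equiv (Fin p) ℝ (U ω))))
      (fun ω => a₂ + b₂ • (EuclideanSpace.equiv (Fin q) ℝ).symm
        (C₂.mulVec (EuclideanSpace.equiv (Fin q) ℝ (V ω))))
      = Real.sqrt |b₁ * b₂| * dcov μ U V :=
  dcov_affine_general μ U V a₁ a₂ b₁ b₂ C₁ hC₁ C₂ hC₂
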